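/- In Construction 1, for a fixed c ∈ F_2^t and α ≠ α' in F_2^t, the sets S_{c,α} and S_{c,α'} are orthogonal to each other. -/
import Mathlib


open Finset

/-- mod-2 inner product on `F_2^n`. -/
def dotp {n : ℕ} (a b : Fin n → ZMod 2) : ZMod 2 := ∑ i, a i * b i

/-- `(-1)^v` for `v ∈ F_2`. -/
def sgn (v : ZMod 2) : ℤ := (-1 : ℤ) ^ v.val

/-- Integer inner product of the ±1-sequences of two Boolean functions on F_2^s × F_2^t. -/
def seqInnerP {s t : ℕ} (f g : (Fin s → ZMod 2) × (Fin t → ZMod 2) → ZMod 2) : ℤ :=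
  ∑ p : (Fin s → ZMod 2) × (Fin t → ZMod 2), sgn (f p) * sgn (g p)

/-- the integer `[y]` represented by the binary vector `y ∈ F_2^s`. -/
def intRep {s : ℕ} (y : Fin s → ZMod 2) : ℕ := ∑ j : Fin s, (y j).val * 2 ^ (j : ℕ)

lemma sgn_add (u v : ZMod 2) : sgn (u + v) = sgn u * sgn v := by
  revert u v; decide

lemma dotp_add_right {n : ℕ} (a u v : Fin n → ZMod 2) :
    dotp a (u + v) = dotp a u + dotp a v := by
  simp [dotp, mul_add, Finset.sum_add_distrib]

lemma dotp_single {n : ℕ} (a : Fin n → ZMod 2) (i : Fin n) :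
    dotp a (Pi.single i 1) = a i := by
  rw [dotp, Finset.sum_eq_single i]
  · simp
  · intro j _ hj; simp [Pi.single_apply, hj]
  · simp

lemma sum_sgn_dotp {n : ℕ} (a : Fin n → ZMod 2) (ha : a ≠ 0) :
    ∑ x : Fin n → ZMod 2, sgn (dotp a x) = 0 := by
  obtain ⟨i, hi⟩ : ∃ i, a i ≠ 0 := by
    by_contra h; push_neg at h; exact ha (funext h)
  have key : ∀ x : Fin n → ZMod 2,
      sgn (dotp a (x + Pi.single i 1)) = - sgn (dotp a x) := by
    intro x
    rw [dotp_add_right, dotp_single]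
    have hai : a i = 1 := by
      have := hi; revert this; generalize a i = z; revert z; decide
    rw [hai]
    generalize dotp a x = w
    revert w; decide
  have hinv : Function.Involutive (fun x : Fin n → ZMod 2 => x + Pi.single i 1) := by
    intro x
    funext j
    simp [Pi.single_apply]
    by_cases hj : j = i <;> simp [hj]
    · generalize x i = z; revert z; decide
  have h := Fintype.sum_equiv (Function.Involutive.toPerm _ hinv)
    (fun x => sgn (dotp a x)) (fun x => - sgn (dotp a x)) ?_
  · have h2 : ∑ x : Fin n → ZMod 2, sgn (dotp a x)
        = -∑ x : Fin n → ZMod 2, sgn (dotp a x) := by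
      simpa [Finset.sum_neg_distrib] using h
    linarith
  · intro x
    simp only [Function.Involutive.toPerm, Equiv.coe_fn_mk]
    rw [key x]
    ring

lemma add_eq_zero_iff_zmod2 (u v : ZMod 2) : u + v = 0 ↔ u = v := by
  revert u v; decide

/-- for a fixed c and α ≠ α'\'', the sets S_{c,α} and S_{c,α'\''} of
Construction 1 are orthogonal to each other. -/
theorem stmt_9 {m s t : ℕ} (hm : m = s + t) (hst : s < t)
    (γ : GaloisField 2 t) (hγ : ∀ z : GaloisField 2 t, z ≠ 0 → ∃ n : ℕ, γ ^ n = z)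
    (π : GaloisField 2 t ≃ₗ[ZMod 2] (Fin t → ZMod 2))
    (c : Fin t → ZMod 2) (ic : ℕ) (hic : γ ^ ic = π.symm c)
    (α α' : Fin t → ZMod 2) (hαα : α ≠ α') :
    ∀ β β' : Fin s → ZMod 2,
      seqInnerP
        (fun p : (Fin s → ZMod 2) × (Fin t → ZMod 2) =>
          dotp (π (γ ^ (ic + intRep p.1))) p.2 + dotp β p.1 + dotp α p.2)
        (fun p : (Fin s → ZMod 2) × (Fin t → ZMod 2) =>
          dotp (π (γ ^ (ic + intRep p.1))) p.2 + dotp β' p.1 + dotp α' p.2) = 0 := by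
  intro β β'
  have ha : α + α' ≠ 0 := by
    intro h
    apply hαα
    funext i
    have : α i + α' i = 0 := congrFun h i
    exact (add_eq_zero_iff_zmod2 _ _).mp this
  have dotp_add_left : ∀ {n : ℕ} (a b x : Fin n → ZMod 2),
      dotp (a + b) x = dotp a x + dotp b x := by
    intro n a b x
    simp [dotp, add_mul, Finset.sum_add_distrib]
  unfold seqInnerP
  have step : ∀ p : (Fin s → ZMod 2) × (Fin t → ZMod 2),
      sgn (dotp (π (γ ^ (ic + intRep p.1))) p.2 + dotp β p.1 + dotp α p.2) *
      sgn (dotp (π (γ ^ (ic + intRep p.1))) p.2 + dotp β' p.1 + dotp α' p.2)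
      = sgn (dotp (β + β') p.1) * sgn (dotp (α + α') p.2) := by
    intro p
    rw [← sgn_add, ← sgn_add, dotp_add_left, dotp_add_left]
    congr 1
    generalize dotp (π (γ ^ (ic + intRep p.1))) p.2 = A
    generalize dotp β p.1 = B
    generalize dotp β' p.1 = B'
    generalize dotp α p.2 = C
    generalize dotp α' p.2 = C'
    revert A B B' C C'; decide
  rw [Finset.sum_congr rfl (fun p _ => step p)]
  rw [Fintype.sum_prod_type]
  simp only [← Finset.mul_sum, sum_sgn_dotp _ ha, mul_zero, Finset.sum_const_zero]
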